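/- arXiv:2105.13590 — 2 statements merged into one kernel-verified Lean document; each statement's English description precedes it below -/
import Mathlib

section
/- Let A be a subset of the negative reals satisfying the descending chain condition, and let B be a subset of the non-negative reals satisfying the descending chain condition. Then the set T = { (-α)/(β - α) : α ∈ A, β ∈ B } is contained in (0,1] and satisfies the ascending chain condition, i.e. T contains no strictly increasing infinite sequence. -/
/-!
The threshold `-α / (β - α) = 1 / (1 + β / (-α))` decreases when `α < 0` or `β ≥ 0` increases,
so it is antitone on `A ×ˢ B` for the product order. Two DCC subsets of `ℝ` are well ordered,
hence `A ×ˢ B` is partially well ordered: any sequence of pairs has indices `m < n` with the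
`m`-th pair below the `n`-th, so the corresponding thresholds cannot increase strictly.
-/

open Set

theorem Set.isPWO_of_not_exists_strictAnti {α : Type*} [LinearOrder α] {s : Set α}
    (hs : ¬ ∃ f : ℕ → α, (∀ n, f n ∈ s) ∧ StrictAnti f) : s.IsPWO :=
  (isWF_iff_no_descending_seq.2 fun f hf hmem => hs ⟨f, hmem, hf⟩).isPWO

theorem Set.IsPWO.not_exists_strictMono_of_antitoneOn {α β : Type*} [Preorder α]
    [Preorder β] {s : Set α} (hs : s.IsPWO) {g : α → β} (hg : AntitoneOn g s) :
    ¬ ∃ f : ℕ → β, (∀ n, f n ∈ g '' s) ∧ StrictMono f := by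
  rintro ⟨f, hmem, hf⟩
  choose x hxs hfx using hmem
  obtain ⟨m, n, hmn, hle⟩ := hs fun n => ⟨x n, hxs n⟩
  have hfnm : f n ≤ f m := by simpa only [hfx] using hg (hxs m) (hxs n) hle
  exact (hf hmn).not_ge hfnm

noncomputable def nefThreshold (p : ℝ × ℝ) : ℝ := -p.1 / (p.2 - p.1)

theorem nefThreshold_mem_Ioc {α β : ℝ} (hα : α < 0) (hβ : 0 ≤ β) :
    nefThreshold (α, β) ∈ Ioc 0 1 := by
  have hd : 0 < β - α := by linarith
  exact ⟨div_pos (neg_pos.2 hα) hd, (div_le_one hd).2 (by linarith)⟩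

theorem antitoneOn_nefThreshold : AntitoneOn nefThreshold (Iio 0 ×ˢ Ici 0) := by
  rintro ⟨α, β⟩ ⟨hα, hβ⟩ ⟨α', β'⟩ ⟨hα', hβ'⟩ ⟨hαα', hββ'⟩
  simp only [mem_Iio, mem_Ici] at hα hβ hα' hβ'
  dsimp only at hαα' hββ'
  rw [nefThreshold, nefThreshold, div_le_div_iff₀ (by linarith) (by linarith)]
  -- cross-multiplied: `-α' (β - α) ≤ -α (β' - α')`, i.e. `α β' ≤ α' β`
  nlinarith [mul_le_mul_of_nonpos_left hββ' hα.le, mul_le_mul_of_nonneg_right hαα' hβ]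

theorem stmt_3 (A B : Set ℝ)
    (hA : A ⊆ Set.Iio 0) (hB : B ⊆ Set.Ici 0)
    (hADCC : ¬ ∃ f : ℕ → ℝ, (∀ n, f n ∈ A) ∧ StrictAnti f)
    (hBDCC : ¬ ∃ f : ℕ → ℝ, (∀ n, f n ∈ B) ∧ StrictAnti f)
    (T : Set ℝ)
    (hT : T = {t : ℝ | ∃ α ∈ A, ∃ β ∈ B, t = (-α) / (β - α)}) :
    T ⊆ Set.Ioc 0 1 ∧ ¬ ∃ f : ℕ → ℝ, (∀ n, f n ∈ T) ∧ StrictMono f := by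
  have hT_image : T = nefThreshold '' (A ×ˢ B) := by
    ext t
    simp only [hT, mem_image, mem_prod, Prod.exists, nefThreshold]
    grind
  subst hT_image
  refine ⟨?_, ?_⟩
  · rintro _ ⟨⟨α, β⟩, ⟨hα, hβ⟩, rfl⟩
    exact nefThreshold_mem_Ioc (hA hα) (hB hβ)
  · have hAB : (A ×ˢ B).IsPWO :=
      (isPWO_of_not_exists_strictAnti hADCC).prod (isPWO_of_not_exists_strictAnti hBDCC)
    exact hAB.not_exists_strictMono_of_antitoneOn
      (antitoneOn_nefThreshold.mono (prod_mono hA hB))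
end

section
/- Let a_1, ..., a_k be positive reals with a_1 + ... + a_k = 1, let m and d be positive integers, and set M := 2d. Let A := { (a_1 n_1 + ... + a_k n_k)/m : n_i ∈ Z, n_i ≥ -mM } ∩ (-∞, 0) and let B := { (c_1 n'_1 + ... + c_l n'_l)/m : n'_i ∈ Z, n'_i ≥ 0 } ∩ [0, ∞), where c_1, ..., c_l are positive reals with c_1 + ... + c_l = 1. Then for any nonempty family (α_j, β_j)_{j ∈ Λ} with α_j ∈ A and β_j ∈ B, the set { (-α_j)/(β_j - α_j) : j ∈ Λ } attains its supremum; that is, there exists j_0 ∈ Λ with (-α_{j_0})/(β_{j_0} - α_{j_0}) = sup_{j ∈ Λ} (-α_j)/(β_j - α_j). -/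
/-!
Every element of `A` is `(∑ aᵢ nᵢ)/m < 0` with each `nᵢ` bounded below, so each `nᵢ` is also
bounded above and `A` is finite; likewise `B` has only finitely many elements below any bound.
Fix one index `j₁` with threshold `t₁ > 0`. A threshold `-α/(β - α) ≥ t₁` forces
`t₁ β ≤ -α ≤ -min A`, so only finitely many pairs `(α, β)`, hence finitely many threshold values,
lie above `t₁`; the largest of them is the supremum.
-/

open Set

section WeightedSums

variable {ι : Type*} [Fintype ι] (a : ι → ℝ) (lo : ι → ℤ)

theorem finite_setOf_weightedSum_le (ha : ∀ i, 0 < a i) (C : ℝ) :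
    {nn : ι → ℤ | lo ≤ nn ∧ ∑ i, a i * (nn i : ℝ) ≤ C}.Finite := by
  classical
  set D : ℝ := C - ∑ i, a i * (lo i : ℝ)
  refine (finite_Icc lo fun i => lo i + ⌈D / a i⌉).subset ?_
  rintro nn ⟨hlo, hC⟩
  refine ⟨hlo, fun i => ?_⟩
  have hterm_nonneg : ∀ j ∈ Finset.univ, 0 ≤ a j * ((nn j : ℝ) - lo j) := fun j _ =>
    mul_nonneg (ha j).le (sub_nonneg.mpr (by exact_mod_cast hlo j))
  have hterm : a i * ((nn i : ℝ) - lo i) ≤ D :=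
    calc a i * ((nn i : ℝ) - lo i) ≤ ∑ j, a j * ((nn j : ℝ) - lo j) :=
          Finset.single_le_sum hterm_nonneg (Finset.mem_univ i)
      _ = ∑ j, a j * (nn j : ℝ) - ∑ j, a j * (lo j : ℝ) := by
          simp only [mul_sub, Finset.sum_sub_distrib]
      _ ≤ D := by linarith
  have hdiff : (nn i : ℝ) - lo i ≤ D / a i := by
    rw [le_div_iff₀ (ha i)]
    linarith
  have hbound : (nn i : ℝ) ≤ lo i + ⌈D / a i⌉ := by linarith [Int.le_ceil (D / a i)]
  exact_mod_cast hbound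

theorem finite_weightedSums_div_inter_Iic (ha : ∀ i, 0 < a i) {m : ℝ} (hm : 0 < m) (C : ℝ) :
    ({x : ℝ | ∃ nn : ι → ℤ, (∀ i, lo i ≤ nn i) ∧ x = (∑ i, a i * (nn i : ℝ)) / m} ∩
      Iic C).Finite := by
  refine ((finite_setOf_weightedSum_le a lo ha (C * m)).image
    fun nn => (∑ i, a i * (nn i : ℝ)) / m).subset ?_
  rintro x ⟨⟨nn, hlo, rfl⟩, hC⟩
  exact ⟨nn, ⟨hlo, (div_le_iff₀ hm).mp hC⟩, rfl⟩

end WeightedSums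

theorem le_div_of_le_neg_div_sub {α β t L : ℝ} (hα : α < 0) (hL : L ≤ α) (hβ : 0 ≤ β)
    (ht : 0 < t) (hle : t ≤ -α / (β - α)) : β ≤ -L / t := by
  rw [le_div_iff₀ (by linarith)] at hle
  rw [le_div_iff₀ ht]
  nlinarith

theorem finite_range_neg_div_sub_inter_Ici {Λ : Type*} {A B : Set ℝ} (hAfin : A.Finite)
    (hA : A ⊆ Iio 0) (hB : B ⊆ Ici 0) (hBfin : ∀ C, (B ∩ Iic C).Finite)
    {α β : Λ → ℝ} (hα : ∀ j, α j ∈ A) (hβ : ∀ j, β j ∈ B) {s : ℝ} (hs : 0 < s) :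
    (range (fun j => -α j / (β j - α j)) ∩ Ici s).Finite := by
  obtain ⟨L, hL⟩ := hAfin.bddBelow
  refine ((hAfin.prod (hBfin (-L / s))).image fun p : ℝ × ℝ => -p.1 / (p.2 - p.1)).subset ?_
  rintro _ ⟨⟨j, rfl⟩, hj⟩
  exact ⟨(α j, β j), ⟨hα j, hβ j,
    le_div_of_le_neg_div_sub (hA (hα j)) (hL (hα j)) (hB (hβ j)) hs hj⟩, rfl⟩

theorem exists_eq_ciSup_of_finite_range_inter_Ici {Λ : Type*} (f : Λ → ℝ) (j₁ : Λ)
    (hfin : (range f ∩ Ici (f j₁)).Finite) : ∃ j₀, f j₀ = ⨆ j, f j := by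
  obtain ⟨_, ⟨⟨j₀, rfl⟩, h₁₀⟩, hmax⟩ :=
    exists_max_image _ id hfin ⟨f j₁, ⟨j₁, rfl⟩, mem_Ici.mpr le_rfl⟩
  have hle : ∀ j, f j ≤ f j₀ := fun j =>
    (le_total (f j₁) (f j)).elim (fun h => hmax _ ⟨⟨j, rfl⟩, h⟩) fun h => h.trans h₁₀
  have : Nonempty Λ := ⟨j₁⟩
  exact ⟨j₀, le_antisymm (le_ciSup ⟨f j₀, forall_mem_range.mpr hle⟩ j₀) (ciSup_le hle)⟩

theorem stmt_9_general (k l m : ℕ) (hm : 0 < m)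
    (a : Fin k → ℝ) (ha : ∀ i, 0 < a i)
    (c : Fin l → ℝ) (hc : ∀ i, 0 < c i)
    (M : ℕ)
    (A B : Set ℝ)
    (hA : A = {x : ℝ | ∃ nn : Fin k → ℤ, (∀ i, -(m * M : ℤ) ≤ nn i) ∧
      x = (∑ i, a i * (nn i : ℝ)) / (m : ℝ)} ∩ Set.Iio 0)
    (hB : B = {x : ℝ | ∃ nn : Fin l → ℤ, (∀ i, 0 ≤ nn i) ∧
      x = (∑ i, c i * (nn i : ℝ)) / (m : ℝ)} ∩ Set.Ici 0)
    (Λ : Type*) [Nonempty Λ]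
    (α β : Λ → ℝ) (hα : ∀ j, α j ∈ A) (hβ : ∀ j, β j ∈ B) :
    ∃ j₀ : Λ, (-(α j₀)) / (β j₀ - α j₀) = ⨆ j : Λ, (-(α j)) / (β j - α j) := by
  have hmR : (0 : ℝ) < m := by exact_mod_cast hm
  have hAneg : A ⊆ Iio 0 := hA ▸ inter_subset_right
  have hBnonneg : B ⊆ Ici 0 := hB ▸ inter_subset_right
  have hAfin : A.Finite := by
    refine (finite_weightedSums_div_inter_Iic a (fun _ => -(m * M : ℤ)) ha hmR 0).subset ?_
    rw [hA]
    exact inter_subset_inter_right _ Iio_subset_Iic_self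
  have hBfin : ∀ C, (B ∩ Iic C).Finite := fun C =>
    (finite_weightedSums_div_inter_Iic c (fun _ => 0) hc hmR C).subset
      (inter_subset_inter_left _ (hB ▸ inter_subset_left))
  obtain ⟨j₁⟩ := ‹Nonempty Λ›
  have ht₁ : 0 < -α j₁ / (β j₁ - α j₁) := by
    have hα₁ : α j₁ < 0 := hAneg (hα j₁)
    have hβ₁ : 0 ≤ β j₁ := hBnonneg (hβ j₁)
    exact div_pos (by linarith) (by linarith)
  exact exists_eq_ciSup_of_finite_range_inter_Ici _ j₁
    (finite_range_neg_div_sub_inter_Ici hAfin hAneg hBnonneg hBfin hα hβ ht₁)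

theorem stmt_9 (k l m d : ℕ) (hk : 0 < k) (hl : 0 < l) (hm : 0 < m) (hd : 0 < d)
    (a : Fin k → ℝ) (ha : ∀ i, 0 < a i) (hasum : ∑ i, a i = 1)
    (c : Fin l → ℝ) (hc : ∀ i, 0 < c i) (hcsum : ∑ i, c i = 1)
    (M : ℕ) (hM : M = 2 * d)
    (A B : Set ℝ)
    (hA : A = {x : ℝ | ∃ nn : Fin k → ℤ, (∀ i, -(m * M : ℤ) ≤ nn i) ∧
      x = (∑ i, a i * (nn i : ℝ)) / (m : ℝ)} ∩ Set.Iio 0)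
    (hB : B = {x : ℝ | ∃ nn : Fin l → ℤ, (∀ i, 0 ≤ nn i) ∧
      x = (∑ i, c i * (nn i : ℝ)) / (m : ℝ)} ∩ Set.Ici 0)
    (Λ : Type*) [Nonempty Λ]
    (α β : Λ → ℝ) (hα : ∀ j, α j ∈ A) (hβ : ∀ j, β j ∈ B) :
    ∃ j₀ : Λ, (-(α j₀)) / (β j₀ - α j₀) = ⨆ j : Λ, (-(α j)) / (β j - α j) :=
  stmt_9_general k l m hm a ha c hc M A B hA hB Λ α β hα hβ
end
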